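/- Analyticity for R(M'_S4): if Λ is a nonempty set of modal formulas closed under subformulas and ṽ ∈ PLV'(Λ), then there exists a level valuation v ∈ L'_S4 whose restriction to Λ coincides with ṽ. -/

import Mathlib

/-- Modal formulas over signature Σ = {¬, □, →, ∨, ∧}. -/
inductive MF
  | var : ℕ → MF
  | neg : MF → MF
  | box : MF → MF
  | imp : MF → MF → MF
  | dis : MF → MF → MF
  | con : MF → MF → MF
deriving DecidableEq

/-- The three truth values 0, 1, 2. -/
inductive V3
  | z | o | t
deriving DecidableEq

/-- Designated values D = {1, 2}. -/
def Des : Set V3 := {V3.o, V3.t}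

def negOp : V3 → Set V3
  | .z => {.o, .t}
  | .o => {.z}
  | .t => {.z}

def boxOp : V3 → Set V3
  | .z => {.z}
  | .o => {.z}
  | .t => {.t}

def impOp : V3 → V3 → Set V3
  | .z, .z => {.o, .t}
  | .z, .o => {.o, .t}
  | .z, .t => {.t}
  | .o, .z => {.z}
  | .o, .o => {.o, .t}
  | .o, .t => {.t}
  | .t, .z => {.z}
  | .t, .o => {.o}
  | .t, .t => {.t}

def disOp : V3 → V3 → Set V3
  | .z, .z => {.z}
  | .z, .o => {.o, .t}
  | .o, .z => {.o, .t}
  | .o, .o => {.o, .t}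
  | _, _ => {.t}

def conOp : V3 → V3 → Set V3
  | .z, _ => {.z}
  | _, .z => {.z}
  | .t, .t => {.t}
  | _, _ => {.o}

/-- Valuations over the reduced Nmatrix M'_S4. -/
def IsVal (v : MF → V3) : Prop :=
  (∀ α, v (.neg α) ∈ negOp (v α)) ∧
  (∀ α, v (.box α) ∈ boxOp (v α)) ∧
  (∀ α β, v (.imp α β) ∈ impOp (v α) (v β)) ∧
  (∀ α β, v (.dis α β) ∈ disOp (v α) (v β)) ∧
  (∀ α β, v (.con α β) ∈ conOp (v α) (v β))

/-- The levels L_k. -/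
def LevelS4 : ℕ → Set (MF → V3)
  | 0 => {v | IsVal v}
  | (k+1) => {v ∈ LevelS4 k | ∀ α, (∀ w ∈ LevelS4 k, w α ∈ Des) → v α = V3.t}

/-- Level valuations L'_S4 = ⋂_{k ≥ 0} L_k. -/
def LVS4 : Set (MF → V3) := ⋂ k, LevelS4 k

/-- Theorems of the Hilbert calculus H_S4 : classical propositional axioms over
{¬,→,∨,∧}, plus K, T, 4, with modus ponens and necessitation. -/
inductive S4Thm : MF → Prop
  | ax1 (α β : MF) : S4Thm (α.imp (β.imp α))
  | ax2 (α β γ : MF) : S4Thm ((α.imp (β.imp γ)).imp ((α.imp β).imp (α.imp γ)))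
  | ax3 (α β : MF) : S4Thm (α.imp (β.imp (α.con β)))
  | ax4 (α β : MF) : S4Thm ((α.con β).imp α)
  | ax5 (α β : MF) : S4Thm ((α.con β).imp β)
  | ax6 (α β : MF) : S4Thm (α.imp (α.dis β))
  | ax7 (α β : MF) : S4Thm (β.imp (α.dis β))
  | ax8 (α β γ : MF) : S4Thm ((α.imp γ).imp ((β.imp γ).imp ((α.dis β).imp γ)))
  | ax9 (α β : MF) : S4Thm ((β.imp α).imp ((β.imp α.neg).imp β.neg))
  | ax10 (α β : MF) : S4Thm (α.imp (α.neg.imp β))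
  | dne (α : MF) : S4Thm (α.neg.neg.imp α)
  | axK (α β : MF) : S4Thm ((α.imp β).box.imp (α.box.imp β.box))
  | axT (α : MF) : S4Thm (α.box.imp α)
  | axFour (α : MF) : S4Thm (α.box.imp α.box.box)
  | mp {α β : MF} : S4Thm (α.imp β) → S4Thm α → S4Thm β
  | nec {α : MF} : S4Thm α → S4Thm α.box

/-- Γ ⊢_S4 φ : either φ is a theorem, or some β₁,…,βₙ ∈ Γ (n ≥ 1) give a theorem
β₁ → (β₂ → (… → (βₙ → φ)…)). -/
def S4Deriv (Γ : Set MF) (φ : MF) : Prop :=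
  S4Thm φ ∨ ∃ l : List MF, l ≠ [] ∧ (∀ β ∈ l, β ∈ Γ) ∧ S4Thm (l.foldr MF.imp φ)

/-- Δ is φ-saturated (w.r.t. ⊢_S4). -/
def SatS4 (Δ : Set MF) (φ : MF) : Prop :=
  ¬ S4Deriv Δ φ ∧ ∀ α ∉ Δ, S4Deriv (insert α Δ) φ

open Classical in
/-- The canonical function v_Δ. -/
noncomputable def vDeltaS4 (Δ : Set MF) : MF → V3 :=
  fun α => if MF.box α ∈ Δ then V3.t else if α ∈ Δ then V3.o else V3.z

/-- Λ is closed under (immediate, hence all) subformulas. -/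
def SubClosed (Λ : Set MF) : Prop :=
  (∀ α, MF.neg α ∈ Λ → α ∈ Λ) ∧
  (∀ α, MF.box α ∈ Λ → α ∈ Λ) ∧
  (∀ α β, MF.imp α β ∈ Λ → α ∈ Λ ∧ β ∈ Λ) ∧
  (∀ α β, MF.dis α β ∈ Λ → α ∈ Λ ∧ β ∈ Λ) ∧
  (∀ α β, MF.con α β ∈ Λ → α ∈ Λ ∧ β ∈ Λ)

/-- Partial valuations with domain Λ (modelled as total functions constrained on Λ). -/
def IsPVal (Λ : Set MF) (v : MF → V3) : Prop :=
  (∀ α, MF.neg α ∈ Λ → v (.neg α) ∈ negOp (v α)) ∧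
  (∀ α, MF.box α ∈ Λ → v (.box α) ∈ boxOp (v α)) ∧
  (∀ α β, MF.imp α β ∈ Λ → v (.imp α β) ∈ impOp (v α) (v β)) ∧
  (∀ α β, MF.dis α β ∈ Λ → v (.dis α β) ∈ disOp (v α) (v β)) ∧
  (∀ α β, MF.con α β ∈ Λ → v (.con α β) ∈ conOp (v α) (v β))

/-- PLV'(Λ): partial' level valuations over Λ (witnesses amongst level valuations). -/
def PLV' (Λ : Set MF) : Set (MF → V3) :=
  {v | IsPVal Λ v ∧ ∀ α ∈ Λ, v α = V3.o →
    ∃ w ∈ LVS4, w α = V3.z ∧ ∀ β ∈ Λ, v β = V3.t → w β = V3.t}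

/-- PLV(Λ): partial level valuations over Λ, defined as the largest subset of
PV(Λ) whose condition is witnessed inside itself. -/
def PLV (Λ : Set MF) : Set (MF → V3) :=
  ⋃₀ {S | (∀ v ∈ S, IsPVal Λ v) ∧
      ∀ v ∈ S, ∀ α ∈ Λ, v α = V3.o →
        ∃ w ∈ S, w α = V3.z ∧ ∀ β ∈ Λ, v β = V3.t → w β = V3.t}

/-- Set of subformulas of a modal formula. -/
def MF.subf : MF → Finset MF
  | .var n => {.var n}
  | .neg α => insert (.neg α) α.subf
  | .box α => insert (.box α) α.subf
  | .imp α β => insert (.imp α β) (α.subf ∪ β.subf)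
  | .dis α β => insert (.dis α β) (α.subf ∪ β.subf)
  | .con α β => insert (.con α β) (α.subf ∪ β.subf)

/-!
A world `x` of a reflexive transitive Kripke model induces a level valuation: `α` gets 2 if `x`
forces `□α`, 1 if `x` forces only `α`, and 0 otherwise. Conversely the level valuations form such
a model themselves, ordered by inclusion of the sets of formulas sent to 2. The one nontrivial
point there is that a level valuation `w` with `w α ≠ 2` has an extension `w'` (sending to 2 all
that `w` does) with `w' α = 0`; this is compactness of `V ^ Form`, in which every `L_k` is closed,
applied to the formulas `□β₁ → … → □βₙ → α`, none of which is `L_k`-valid.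

Put a root below the level valuations that send to 2 every `β ∈ Λ` with `ṽ β = 2`, evaluating
atoms by `ṽ`. The witnesses demanded by `PLV'` are exactly what makes the root force `□α`, for
`α ∈ Λ`, only when `ṽ α = 2`, so the root induces `ṽ` on `Λ`.
-/

instance : Fintype V3 := ⟨{.z, .o, .t}, fun x => by cases x <;> simp⟩

instance : TopologicalSpace V3 := ⊥

instance : DiscreteTopology V3 := ⟨rfl⟩

theorem not_mem_Des_iff {x : V3} : x ∉ Des ↔ x = V3.z := by
  cases x <;> simp [Des]

/- Each table is described by two clauses: designation is classical, and the value 2 obeys the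
laws of necessary truth in a reflexive transitive Kripke model. -/

theorem mem_negOp_iff {x r : V3} : r ∈ negOp x ↔ (r ∈ Des ↔ x ∉ Des) := by
  cases x <;> cases r <;> simp [negOp, Des]

theorem mem_boxOp_iff {x r : V3} :
    r ∈ boxOp x ↔ (r ∈ Des ↔ x = V3.t) ∧ (r = V3.t ↔ x = V3.t) := by
  cases x <;> cases r <;> simp [boxOp, Des]

theorem mem_impOp_iff {x y r : V3} :
    r ∈ impOp x y ↔ (r ∈ Des ↔ (x ∈ Des → y ∈ Des)) ∧ (y = V3.t → r = V3.t) ∧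
      (r = V3.t → x = V3.t → y = V3.t) := by
  cases x <;> cases y <;> cases r <;> simp [impOp, Des]

theorem mem_disOp_iff {x y r : V3} :
    r ∈ disOp x y ↔ (r ∈ Des ↔ (x ∈ Des ∨ y ∈ Des)) ∧ (x = V3.t ∨ y = V3.t → r = V3.t) := by
  cases x <;> cases y <;> cases r <;> simp [disOp, Des]

theorem mem_conOp_iff {x y r : V3} :
    r ∈ conOp x y ↔ (r ∈ Des ↔ (x ∈ Des ∧ y ∈ Des)) ∧ (r = V3.t ↔ x = V3.t ∧ y = V3.t) := by
  cases x <;> cases y <;> cases r <;> simp [conOp, Des]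

theorem mem_impOp_t_iff {y r : V3} : r ∈ impOp V3.t y ↔ r = y := by
  cases y <;> cases r <;> simp [impOp]

section Valuation

variable {v : MF → V3}

theorem IsVal.isPVal (hv : IsVal v) (Λ : Set MF) : IsPVal Λ v :=
  ⟨fun a _ => hv.1 a, fun a _ => hv.2.1 a, fun a b _ => hv.2.2.1 a b,
    fun a b _ => hv.2.2.2.1 a b, fun a b _ => hv.2.2.2.2 a b⟩

theorem IsVal.box_eq_t_iff (hv : IsVal v) {a : MF} : v a.box = V3.t ↔ v a = V3.t :=
  (mem_boxOp_iff.1 (hv.2.1 a)).2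

theorem IsVal.box_mem_Des_iff (hv : IsVal v) {a : MF} : v a.box ∈ Des ↔ v a = V3.t :=
  (mem_boxOp_iff.1 (hv.2.1 a)).1

theorem IsVal.imp_eq_z_iff (hv : IsVal v) {a b : MF} :
    v (a.imp b) = V3.z ↔ v a ∈ Des ∧ v b = V3.z := by
  rw [← not_mem_Des_iff, ← not_mem_Des_iff, (mem_impOp_iff.1 (hv.2.2.1 a b)).1]
  tauto

def boxedImp (l : List MF) (a : MF) : MF :=
  l.foldr (fun b φ => b.box.imp φ) a

theorem IsVal.boxedImp_eq (hv : IsVal v) {l : List MF} (hl : ∀ b ∈ l, v b = V3.t) (a : MF) :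
    v (boxedImp l a) = v a := by
  induction l with
  | nil => rfl
  | cons b l ih =>
    have hb : v b.box = V3.t := hv.box_eq_t_iff.2 (hl b List.mem_cons_self)
    have himp := hv.2.2.1 b.box (boxedImp l a)
    rw [hb, mem_impOp_t_iff, ih fun c hc => hl c (List.mem_cons_of_mem b hc)] at himp
    exact himp

theorem IsVal.boxedImp_eq_z_iff (hv : IsVal v) {l : List MF} {a : MF} :
    v (boxedImp l a) = V3.z ↔ v a = V3.z ∧ ∀ b ∈ l, v b = V3.t := by
  induction l with
  | nil => simp [boxedImp]
  | cons b l ih =>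
    simp only [boxedImp, List.foldr_cons, List.mem_cons, forall_eq_or_imp] at ih ⊢
    rw [hv.imp_eq_z_iff, hv.box_mem_Des_iff, ih]
    tauto

end Valuation

def topSet (v : MF → V3) : Set MF := {a | v a = V3.t}

theorem levelS4_antitone : Antitone LevelS4 :=
  antitone_nat_of_succ_le fun _ _ hv => hv.1

theorem IsVal.of_mem_levelS4 {k : ℕ} {v : MF → V3} (hv : v ∈ LevelS4 k) : IsVal v :=
  levelS4_antitone (Nat.zero_le k) hv

theorem IsVal.of_mem_LVS4 {v : MF → V3} (hv : v ∈ LVS4) : IsVal v :=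
  Set.mem_iInter.1 hv 0

theorem isClosed_setOf_apply₃ (P : V3 → V3 → V3 → Prop) (a b c : MF) :
    IsClosed {v : MF → V3 | P (v a) (v b) (v c)} :=
  (isClosed_discrete {p : V3 × V3 × V3 | P p.1 p.2.1 p.2.2}).preimage
    (f := fun v : MF → V3 => (v a, v b, v c)) (by fun_prop)

theorem isClosed_levelS4 (k : ℕ) : IsClosed (LevelS4 k) := by
  induction k with
  | zero =>
    simp only [LevelS4, IsVal, Set.ofPred_and, Set.ofPred_forall]
    refine .inter (isClosed_iInter fun a => ?_) (.inter (isClosed_iInter fun a => ?_)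
      (.inter (isClosed_iInter fun a => isClosed_iInter fun b => ?_)
      (.inter (isClosed_iInter fun a => isClosed_iInter fun b => ?_)
      (isClosed_iInter fun a => isClosed_iInter fun b => ?_))))
    exacts [isClosed_setOf_apply₃ (fun r x _ => r ∈ negOp x) a.neg a a,
      isClosed_setOf_apply₃ (fun r x _ => r ∈ boxOp x) a.box a a,
      isClosed_setOf_apply₃ (fun r x y => r ∈ impOp x y) (a.imp b) a b,
      isClosed_setOf_apply₃ (fun r x y => r ∈ disOp x y) (a.dis b) a b,
      isClosed_setOf_apply₃ (fun r x y => r ∈ conOp x y) (a.con b) a b]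
  | succ k ih =>
    simp only [LevelS4, Set.ofPred_and, Set.ofPred_forall]
    exact ih.inter (isClosed_iInter fun a => isClosed_iInter fun _ =>
      isClosed_setOf_apply₃ (fun x _ _ => x = V3.t) a a a)

theorem exists_mem_LVS4_of_forall_levelS4 {T : Set MF} {a : MF}
    (h : ∀ k (l : List MF), (∀ b ∈ l, b ∈ T) →
      ∃ v ∈ LevelS4 k, v a = V3.z ∧ ∀ b ∈ l, v b = V3.t) :
    ∃ w ∈ LVS4, w a = V3.z ∧ T ⊆ topSet w := by
  let F (i : ℕ × {l : List MF // ∀ b ∈ l, b ∈ T}) : Set (MF → V3) :=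
    LevelS4 i.1 ∩ {v | v a = V3.z ∧ ∀ b ∈ i.2.1, v b = V3.t}
  have hclosed (i) : IsClosed (F i) := by
    simp only [F, Set.ofPred_and, Set.ofPred_forall]
    exact (isClosed_levelS4 _).inter ((isClosed_setOf_apply₃ (fun x _ _ => x = V3.z) a a a).inter
      (isClosed_iInter fun b => isClosed_iInter fun _ =>
        isClosed_setOf_apply₃ (fun x _ _ => x = V3.t) b b b))
  have hdirected : Directed (· ⊇ ·) F := by
    rintro ⟨k, l, hl⟩ ⟨k', l', hl'⟩
    refine ⟨⟨max k k', l ++ l', by simpa [or_imp, forall_and] using ⟨hl, hl'⟩⟩, ?_, ?_⟩ <;>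
      rintro v ⟨hv, hva, hvl⟩ <;> refine ⟨levelS4_antitone (by omega) hv, hva, fun b hb => hvl b ?_⟩
    exacts [List.mem_append_left _ hb, List.mem_append_right _ hb]
  have : Nonempty (ℕ × {l : List MF // ∀ b ∈ l, b ∈ T}) := ⟨(0, ⟨[], by simp⟩)⟩
  obtain ⟨w, hw⟩ := IsCompact.nonempty_iInter_of_directed_nonempty_isCompact_isClosed F hdirected
    (fun i => h i.1 i.2.1 i.2.2) (fun i => (hclosed i).isCompact) hclosed
  rw [Set.mem_iInter] at hw
  have hnil (k : ℕ) := hw (k, ⟨[], by simp⟩)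
  exact ⟨w, Set.mem_iInter.2 fun k => (hnil k).1, (hnil 0).2.1,
    fun b hb => (hw (0, ⟨[b], by simpa⟩)).2.2 b (List.mem_singleton_self b)⟩

theorem exists_mem_LVS4_eq_z_of_ne_t {w : MF → V3} (hw : w ∈ LVS4) {a : MF} (ha : w a ≠ V3.t) :
    ∃ w' ∈ LVS4, w' a = V3.z ∧ topSet w ⊆ topSet w' := by
  refine exists_mem_LVS4_of_forall_levelS4 fun k l hl => ?_
  -- `boxedImp l a` takes the value `w a ≠ 2` at `w ∈ L_{k+1}`, so some `v ∈ L_k` refutes it.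
  have hrefuted : ¬ ∀ v ∈ LevelS4 k, v (boxedImp l a) ∈ Des := fun hvalid =>
    ha ((IsVal.of_mem_LVS4 hw).boxedImp_eq hl a ▸ (Set.mem_iInter.1 hw (k + 1)).2 _ hvalid)
  push Not at hrefuted
  obtain ⟨v, hv, hva⟩ := hrefuted
  exact ⟨v, hv, (IsVal.of_mem_levelS4 hv).boxedImp_eq_z_iff.1 (not_mem_Des_iff.1 hva)⟩

theorem eq_t_iff_forall_mem_LVS4 {w : MF → V3} (hw : w ∈ LVS4) {a : MF} :
    w a = V3.t ↔ ∀ w' ∈ LVS4, topSet w ⊆ topSet w' → w' a ∈ Des := by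
  refine ⟨fun ha w' _ hsub => by simp [show w' a = V3.t from hsub ha, Des], fun h => ?_⟩
  by_contra ha
  obtain ⟨w', hw', hw'a, hsub⟩ := exists_mem_LVS4_eq_z_of_ne_t hw ha
  simpa [hw'a, Des] using h w' hw' hsub

structure KripkeModel where
  W : Type
  R : W → W → Prop
  refl : ∀ x, R x x
  trans : ∀ {x y z}, R x y → R y z → R x z
  val : W → ℕ → Prop

namespace KripkeModel

variable (M : KripkeModel)

def Forces : M.W → MF → Prop
  | x, .var n => M.val x n
  | x, .neg a => ¬ Forces x a
  | x, .box a => ∀ y, M.R x y → Forces y a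
  | x, .imp a b => Forces x a → Forces x b
  | x, .dis a b => Forces x a ∨ Forces x b
  | x, .con a b => Forces x a ∧ Forces x b

open Classical in
noncomputable def valuationAt (x : M.W) (a : MF) : V3 :=
  if M.Forces x a.box then V3.t else if M.Forces x a then V3.o else V3.z

variable {M} {x : M.W} {a : MF}

theorem Forces.of_box (h : M.Forces x a.box) : M.Forces x a :=
  h x (M.refl x)

theorem forces_box_box_iff : M.Forces x a.box.box ↔ M.Forces x a.box :=
  ⟨fun h y hy => h x (M.refl x) y hy, fun h _ hy _ hz => h _ (M.trans hy hz)⟩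

theorem valuationAt_mem_Des_iff : M.valuationAt x a ∈ Des ↔ M.Forces x a := by
  unfold valuationAt
  by_cases hb : M.Forces x a.box
  · simp [hb, hb.of_box, Des]
  · by_cases ha : M.Forces x a <;> simp [hb, ha, Des]

theorem valuationAt_eq_t_iff : M.valuationAt x a = V3.t ↔ M.Forces x a.box := by
  unfold valuationAt
  by_cases hb : M.Forces x a.box
  · simp [hb]
  · by_cases ha : M.Forces x a <;> simp [hb, ha]

theorem valuationAt_eq_of_iff {r : V3} (hdes : M.Forces x a ↔ r ∈ Des)
    (hbox : M.Forces x a.box ↔ r = V3.t) : M.valuationAt x a = r := by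
  rw [← valuationAt_mem_Des_iff] at hdes
  rw [← valuationAt_eq_t_iff] at hbox
  cases r <;> cases h : M.valuationAt x a <;> simp_all [Des]

variable (M)

theorem isVal_valuationAt (x : M.W) : IsVal (M.valuationAt x) := by
  simp only [IsVal, mem_negOp_iff, mem_boxOp_iff, mem_impOp_iff, mem_disOp_iff, mem_conOp_iff,
    valuationAt_mem_Des_iff, valuationAt_eq_t_iff]
  refine ⟨fun a => Iff.rfl, fun a => ⟨trivial, forces_box_box_iff⟩,
    fun a b => ⟨Iff.rfl, fun hb y hy _ => hb y hy, fun hab ha y hy => hab y hy (ha y hy)⟩,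
    fun a b => ⟨Iff.rfl, ?_⟩, fun a b => ⟨Iff.rfl, ?_⟩⟩
  · rintro (h | h) y hy
    exacts [Or.inl (h y hy), Or.inr (h y hy)]
  · exact ⟨fun h => ⟨fun y hy => (h y hy).1, fun y hy => (h y hy).2⟩,
      fun h y hy => ⟨h.1 y hy, h.2 y hy⟩⟩

theorem valuationAt_mem_levelS4 (k : ℕ) (x : M.W) : M.valuationAt x ∈ LevelS4 k := by
  induction k generalizing x with
  | zero => exact M.isVal_valuationAt x
  | succ k ih =>
    exact ⟨ih x, fun a ha => valuationAt_eq_t_iff.2 fun y _ =>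
      valuationAt_mem_Des_iff.1 (ha _ (ih y))⟩

theorem valuationAt_mem_LVS4 (x : M.W) : M.valuationAt x ∈ LVS4 :=
  Set.mem_iInter.2 fun k => M.valuationAt_mem_levelS4 k x

theorem forces_iff_mem_Des_of_isPVal {Λ : Set MF} (hΛ : SubClosed Λ) (u : M.W → MF → V3)
    (hu : ∀ x, IsPVal Λ (u x)) (hvar : ∀ x n, M.Forces x (.var n) ↔ u x (.var n) ∈ Des)
    (hbox : ∀ a, a.box ∈ Λ → (∀ x, M.Forces x a ↔ u x a ∈ Des) →
      ∀ x, M.Forces x a.box ↔ u x a = V3.t) :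
    ∀ a ∈ Λ, ∀ x, M.Forces x a ↔ u x a ∈ Des := by
  intro a
  induction a with
  | var n => exact fun _ x => hvar x n
  | neg a ih =>
    intro h x
    rw [mem_negOp_iff.1 ((hu x).1 a h), ← ih (hΛ.1 a h) x]
    exact Iff.rfl
  | box a ih =>
    intro h x
    rw [(mem_boxOp_iff.1 ((hu x).2.1 a h)).1, hbox a h (ih (hΛ.2.1 a h)) x]
  | imp a b iha ihb =>
    intro h x
    obtain ⟨ha, hb⟩ := hΛ.2.2.1 a b h
    rw [(mem_impOp_iff.1 ((hu x).2.2.1 a b h)).1, ← iha ha x, ← ihb hb x]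
    exact Iff.rfl
  | dis a b iha ihb =>
    intro h x
    obtain ⟨ha, hb⟩ := hΛ.2.2.2.1 a b h
    rw [(mem_disOp_iff.1 ((hu x).2.2.2.1 a b h)).1, ← iha ha x, ← ihb hb x]
    exact Iff.rfl
  | con a b iha ihb =>
    intro h x
    obtain ⟨ha, hb⟩ := hΛ.2.2.2.2 a b h
    rw [(mem_conOp_iff.1 ((hu x).2.2.2.2 a b h)).1, ← iha ha x, ← ihb hb x]
    exact Iff.rfl

end KripkeModel

def rootModel (Λ : Set MF) (vp : MF → V3) : KripkeModel where
  W := Option LVS4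
  R
    | none, none => True
    | none, some w => ∀ b ∈ Λ, vp b = V3.t → w.1 b = V3.t
    | some w, some w' => topSet w ⊆ topSet w'
    | some _, none => False
  refl
    | none => trivial
    | some _ => subset_rfl
  trans {x y z} := match x, y, z with
    | none, none, _ => fun _ h => h
    | none, some _, some _ => fun h₁ h₂ b hb hvb => h₂ (h₁ b hb hvb)
    | some _, some _, some _ => fun h₁ h₂ => h₁.trans h₂
    | _, some _, none => fun _ h => h.elim
    | some _, none, _ => fun h => h.elim
  val
    | none, n => vp (.var n) ∈ Des
    | some w, n => w.1 (.var n) ∈ Des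

theorem forces_box_rootModel_iff {Λ : Set MF} {vp : MF → V3} (hvp : vp ∈ PLV' Λ) {a : MF}
    (ha : a ∈ Λ)
    (ih : ∀ x, (rootModel Λ vp).Forces x a ↔ x.elim vp Subtype.val a ∈ Des) :
    ∀ x, (rootModel Λ vp).Forces x a.box ↔ x.elim vp Subtype.val a = V3.t := by
  rintro (_ | ⟨w, hw⟩)
  · refine ⟨fun h => ?_, fun hva => ?_⟩
    · have hdes : vp a ∈ Des := (ih none).1 (h none trivial)
      by_contra hvt
      obtain ⟨w, hw, hwa, hwΛ⟩ := hvp.2 a ha (by cases hv : vp a <;> simp_all [Des])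
      simpa [hwa, Des] using (ih (some ⟨w, hw⟩)).1 (h (some ⟨w, hw⟩) hwΛ)
    · rintro (_ | w) hR
      · exact (ih none).2 (by simp [hva, Des])
      · exact (ih (some w)).2 (by simp [hR a ha hva, Des])
  · refine (eq_t_iff_forall_mem_LVS4 hw).trans ⟨fun h => ?_, fun h w' hw' hsub => ?_⟩ |>.symm
    · rintro (_ | ⟨w', hw'⟩) hR
      · exact hR.elim
      · exact (ih _).2 (h w' hw' hR)
    · exact (ih (some ⟨w', hw'⟩)).1 (h _ hsub)

theorem s4_analyticity_general (Λ : Set MF) (hcl : SubClosed Λ)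
    (vp : MF → V3) (hvp : vp ∈ PLV' Λ) :
    ∃ v ∈ LVS4, ∀ α ∈ Λ, v α = vp α := by
  have htruth := (rootModel Λ vp).forces_iff_mem_Des_of_isPVal hcl (fun x => x.elim vp Subtype.val)
    (by rintro (_ | w); exacts [hvp.1, (IsVal.of_mem_LVS4 w.2).isPVal Λ])
    (by rintro (_ | w) n <;> rfl)
    (fun a ha ih => forces_box_rootModel_iff hvp (hcl.2.1 a ha) ih)
  exact ⟨_, (rootModel Λ vp).valuationAt_mem_LVS4 none, fun a ha =>
    KripkeModel.valuationAt_eq_of_iff (htruth a ha none)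
      (forces_box_rootModel_iff hvp ha (htruth a ha) none)⟩

/-- Analyticity for R(M'_S4): every member of PLV'(Λ) extends to a
level valuation. -/
theorem s4_analyticity (Λ : Set MF) (hne : Λ.Nonempty) (hcl : SubClosed Λ)
    (vp : MF → V3) (hvp : vp ∈ PLV' Λ) :
    ∃ v ∈ LVS4, ∀ α ∈ Λ, v α = vp α :=
  s4_analyticity_general Λ hcl vp hvp
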